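/- Let A be an algebraic curvature tensor on (V,⟨·,·⟩) and let y ∈ V be a vector such that J(x)y = 0 for every x ∈ V. Then A(x₁,x₂,x₃,y) = 0 for all x₁, x₂, x₃ ∈ V. -/

import Mathlib

/-! If `J(x)y = 0` for all `x`, then `𝒜(y,·)·` is alternating, so `F(a,b,c) = A(y,a,b,c)` is
antisymmetric in `a, b`. The Bianchi identity for `(y,a,b,c)`, rewritten with the pair symmetry
`A(a,b,y,c) = A(y,c,a,b)`, then gives `2 F(a,b,c) + F(c,a,b) = 0`; rotating three times yields
`F = -F/8`, so `F = 0`, and `A(x₁,x₂,x₃,y) = ±F(x₃,x₁,x₂)` by the symmetries of `A`. -/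

noncomputable section

/-- The Jacobi operator `J(x) : y ↦ 𝒜(y,x)x` of a (tri)linear curvature operator `𝒜`. -/
def jacobiOp {V : Type*} [AddCommGroup V] [Module ℝ V]
    (Aop : V →ₗ[ℝ] V →ₗ[ℝ] V →ₗ[ℝ] V) (x : V) : V →ₗ[ℝ] V where
  toFun y := Aop y x x
  map_add' y z := by simp
  map_smul' c y := by simp

/-- The polarized Jacobi operator `J(x,y) : z ↦ ½(𝒜(z,x)y + 𝒜(z,y)x)`. -/
def jacobiPol {V : Type*} [AddCommGroup V] [Module ℝ V]
    (Aop : V →ₗ[ℝ] V →ₗ[ℝ] V →ₗ[ℝ] V) (x y : V) : V →ₗ[ℝ] V where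
  toFun z := (1/2 : ℝ) • (Aop z x y + Aop z y x)
  map_add' a b := by simp [smul_add]; abel
  map_smul' c a := by simp [smul_add, smul_comm c]

theorem isAlt_of_forall_jacobiOp_eq_zero {V : Type*} [AddCommGroup V] [Module ℝ V]
    {Aop : V →ₗ[ℝ] V →ₗ[ℝ] V →ₗ[ℝ] V} {y : V} (hy : ∀ x : V, jacobiOp Aop x y = 0) :
    (Aop y).IsAlt :=
  hy

theorem eq_zero_of_two_mul_add_rotate_eq_zero {α : Type*} {F : α → α → α → ℝ}
    (h : ∀ a b c, 2 * F a b c + F c a b = 0) (a b c : α) : F a b c = 0 := by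
  linarith [h a b c, h c a b, h b c a]

theorem two_mul_add_rotate_eq_zero_of_isAlt {V : Type*} [AddCommGroup V] [Module ℝ V]
    (B : LinearMap.BilinForm ℝ V) (Aop : V →ₗ[ℝ] V →ₗ[ℝ] V →ₗ[ℝ] V)
    (hA1 : ∀ x y z w : V, B (Aop x y z) w = - B (Aop y x z) w)
    (hA2 : ∀ x y z w : V, B (Aop x y z) w = B (Aop z w x) y)
    (hA3 : ∀ x y z w : V, B (Aop x y z) w + B (Aop y z x) w + B (Aop z x y) w = 0)
    {y : V} (hy : (Aop y).IsAlt) (a b c : V) :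
    2 * B (Aop y a b) c + B (Aop y c a) b = 0 := by
  have hswap : B (Aop b y a) c = B (Aop y a b) c := by
    rw [hA1, ← hy.neg, map_neg, LinearMap.neg_apply, neg_neg]
  linarith [hA3 y a b c, hA2 a b y c]

theorem jacobi_annihilates_implies_curvature_annihilates
    {V : Type*} [AddCommGroup V] [Module ℝ V]
    -- a nondegenerate symmetric bilinear form ⟨·,·⟩ on V
    (B : LinearMap.BilinForm ℝ V)
    -- the curvature operator 𝒜, with `A x y z w = ⟨𝒜(x,y)z, w⟩`
    (Aop : V →ₗ[ℝ] V →ₗ[ℝ] V →ₗ[ℝ] V)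
    -- A(x,y,z,w) = -A(y,x,z,w)
    (hA1 : ∀ x y z w : V, B (Aop x y z) w = - B (Aop y x z) w)
    -- A(x,y,z,w) = A(z,w,x,y)
    (hA2 : ∀ x y z w : V, B (Aop x y z) w = B (Aop z w x) y)
    -- first Bianchi identity
    (hA3 : ∀ x y z w : V, B (Aop x y z) w + B (Aop y z x) w + B (Aop z x y) w = 0)
    (y : V) (hy : ∀ x : V, jacobiOp Aop x y = 0) :
    ∀ x₁ x₂ x₃ : V, B (Aop x₁ x₂ x₃) y = 0 := by
  have hF := eq_zero_of_two_mul_add_rotate_eq_zero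
    (two_mul_add_rotate_eq_zero_of_isAlt B Aop hA1 hA2 hA3 (isAlt_of_forall_jacobiOp_eq_zero hy))
  intro x₁ x₂ x₃
  rw [hA2 x₁ x₂ x₃ y, hA1 x₃ y x₁ x₂, hF, neg_zero]
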